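/- arXiv:2407.12477 — 6 statements merged into one kernel-verified Lean document; each statement's English description precedes it below -/
import Mathlib

section
/- If $\lambda_1, \lambda_2, s, C_1, C_4, C_5$ satisfy the lens matching system: $-\frac{\lambda_2}{2(\sigma+1)}(L-s)^2 + h_1^m = C_4$, $-\frac{\lambda_2}{\sigma+1}(L-s) = C_5$, $\frac{\lambda_1-\lambda_2}{2\sigma}s^2 + C_1 = C_4$, $\frac{\lambda_2-(\sigma+1)\lambda_1}{2\sigma}s^2 + h^m = 0$, $-\frac{\lambda_1-\lambda_2}{\sigma}s = -\sqrt{\frac{2\phi}{\sigma(\sigma+1)}} + C_5$, and $-\frac{\lambda_2-(\sigma+1)\lambda_1}{\sigma}s = \sqrt{\frac{2\phi(\sigma+1)}{\sigma}}$, with $s>0$, $\sigma>0$, $\phi>0$, $h^m>0$, then $\lambda_2 = 0$, $C_5 = 0$, $\lambda_1 = \phi/h^m$, and $s = \sqrt{\frac{2\sigma}{(\sigma+1)\phi}}\, h^m$. -/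
theorem lens_matching (σ φ L hm h1m : ℝ) (hσ : σ > 0) (hφ : φ > 0)
    (hL : L > 0) (hhm : hm > 0) (hh1m : h1m > 0)
    (l1 l2 s C1 C4 C5 : ℝ) (hs : s > 0)
    (e1 : -(l2 / (2 * (σ + 1))) * (L - s) ^ 2 + h1m = C4)
    (e2 : -(l2 / (σ + 1)) * (L - s) = C5)
    (e3 : (l1 - l2) / (2 * σ) * s ^ 2 + C1 = C4)
    (e4 : (l2 - (σ + 1) * l1) / (2 * σ) * s ^ 2 + hm = 0)
    (e5 : -((l1 - l2) / σ) * s = -Real.sqrt (2 * φ / (σ * (σ + 1))) + C5)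
    (e6 : -((l2 - (σ + 1) * l1) / σ) * s = Real.sqrt (2 * φ * (σ + 1) / σ)) :
    l2 = 0 ∧ C5 = 0 ∧ l1 = φ / hm ∧ s = Real.sqrt (2 * σ / ((σ + 1) * φ)) * hm := by
  have hσ1 : σ + 1 > 0 := by linarith
  have hσ' : σ ≠ 0 := ne_of_gt hσ
  have hσ1' : σ + 1 ≠ 0 := ne_of_gt hσ1
  set a := Real.sqrt (2 * φ / (σ * (σ + 1))) with ha_def
  have ha : a > 0 := Real.sqrt_pos.mpr (by positivity)
  have ha2 : a ^ 2 = 2 * φ / (σ * (σ + 1)) := Real.sq_sqrt (by positivity)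
  have h2φ : σ * (σ + 1) * a ^ 2 = 2 * φ := by
    rw [ha2]; field_simp
  have hB : Real.sqrt (2 * φ * (σ + 1) / σ) = (σ + 1) * a := by
    rw [show 2 * φ * (σ + 1) / σ = ((σ + 1) * a) ^ 2 by
      field_simp; nlinarith [h2φ]]
    exact Real.sqrt_sq (by positivity)
  rw [hB] at e6
  field_simp at e2 e4 e5 e6
  have hl2 : l2 = 0 := by
    have h0 : l2 * L * σ = 0 := by linear_combination (σ+1)*e5 + e6 - σ*e2
    rcases mul_eq_zero.mp h0 with h | h
    · rcases mul_eq_zero.mp h with h | h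
      · exact h
      · exact absurd h (ne_of_gt hL)
    · exact absurd h hσ'
  subst hl2
  have hC5 : C5 = 0 := by
    have h : C5 * (σ + 1) = 0 := by linear_combination -e2
    rcases mul_eq_zero.mp h with h | h
    · exact h
    · exact absurd h hσ1'
  subst hC5
  have h16 : l1 * s = σ * a := by
    have h : (l1 * s - σ * a) * (σ + 1) = 0 := by linear_combination e6
    rcases mul_eq_zero.mp h with h | h
    · linarith [sub_eq_zero.mp h]
    · exact absurd h hσ1'
  have h14 : (σ + 1) * l1 * s ^ 2 = 2 * σ * hm := by linear_combination -e4
  have hss : l1 ^ 2 * s ^ 2 = σ ^ 2 * a ^ 2 := by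
    linear_combination (l1 * s + σ * a) * h16
  have key : l1 * (2 * hm) = σ * (σ + 1) * a ^ 2 := by
    have h : (l1 * (2 * hm) - σ * (σ + 1) * a ^ 2) * σ = 0 := by
      linear_combination (σ + 1) * hss - l1 * h14
    rcases mul_eq_zero.mp h with h | h
    · linarith [sub_eq_zero.mp h]
    · exact absurd h hσ'
  have hl1 : l1 = φ / hm := by
    rw [h2φ] at key
    rw [eq_div_iff hhm.ne']
    linarith
  refine ⟨rfl, rfl, hl1, ?_⟩
  have hsval : Real.sqrt (2 * σ / ((σ + 1) * φ)) = 2 / ((σ + 1) * a) := by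
    rw [show 2 * σ / ((σ + 1) * φ) = (2 / ((σ + 1) * a)) ^ 2 by
      rw [div_pow, div_eq_div_iff (by positivity) (by positivity)]
      linear_combination (2 * (σ + 1)) * h2φ]
    exact Real.sqrt_sq (by positivity)
  rw [hsval]
  have hsφ : s * φ = σ * a * hm := by
    rw [hl1] at h16
    field_simp at h16
    linarith
  have hfin : s * ((σ + 1) * a) * φ = 2 * hm * φ := by
    linear_combination (σ + 1) * a * hsφ + hm * h2φ
  have hfin2 : s * ((σ + 1) * a) = 2 * hm := mul_right_cancel₀ hφ.ne' hfin
  rw [div_mul_eq_mul_div, eq_div_iff (by positivity)]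
  linear_combination hfin2
end

section
/- If $\lambda_1, \lambda_2, s, C, C_2, C_3$ satisfy the internal-drop matching system: $-\frac{\lambda_1}{2}(L-s)^2 + h^m = C_2$, $-\lambda_1(L-s) = C_3$, $\frac{\lambda_1-\lambda_2}{2\sigma}s^2 + h_1^m = 0$, $\frac{\lambda_2-(\sigma+1)\lambda_1}{2\sigma}s^2 + C = C_2$, $-\frac{\lambda_1-\lambda_2}{\sigma}s = \sqrt{\frac{2\phi}{\sigma}}$, $-\frac{\lambda_2-(\sigma+1)\lambda_1}{\sigma}s = -\sqrt{\frac{2\phi}{\sigma}} + C_3$, with $s > 0$, $\sigma > 0$, $\phi > 0$, $h_1^m > 0$, then $\lambda_1 = 0$, $\lambda_2 = \phi/h_1^m$, and $s = \sqrt{\frac{2\sigma}{\phi}}\, h_1^m$. -/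
theorem internal_drop_matching (σ φ L hm h1m : ℝ) (hσ : σ > 0) (hφ : φ > 0)
    (hL : L > 0) (hhm : hm > 0) (hh1m : h1m > 0)
    (l1 l2 s C C2 C3 : ℝ) (hs : s > 0)
    (e1 : -(l1 / 2) * (L - s) ^ 2 + hm = C2)
    (e2 : -l1 * (L - s) = C3)
    (e3 : (l1 - l2) / (2 * σ) * s ^ 2 + h1m = 0)
    (e4 : (l2 - (σ + 1) * l1) / (2 * σ) * s ^ 2 + C = C2)
    (e5 : -((l1 - l2) / σ) * s = Real.sqrt (2 * φ / σ))
    (e6 : -((l2 - (σ + 1) * l1) / σ) * s = -Real.sqrt (2 * φ / σ) + C3) :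
    l1 = 0 ∧ l2 = φ / h1m ∧ s = Real.sqrt (2 * σ / φ) * h1m := by
  have hσ' : σ ≠ 0 := ne_of_gt hσ
  set q := Real.sqrt (2 * φ / σ) with hqdef
  have hq2 : q ^ 2 = 2 * φ / σ := Real.sq_sqrt (by positivity)
  have hqpos : q > 0 := Real.sqrt_pos.mpr (by positivity)
  -- l1 = 0
  have h7 : l1 * s = C3 := by
    have := e5
    field_simp at this e6 ⊢
    nlinarith [this, e6]
  have hl1 : l1 = 0 := by
    have hL0 : l1 * L = 0 := by nlinarith [h7, e2]
    rcases mul_eq_zero.mp hL0 with h | h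
    · exact h
    · exact absurd h (ne_of_gt hL)
  subst hl1
  -- from e3: l2 * s^2 = 2 σ h1m
  have h3 : l2 * s ^ 2 = 2 * σ * h1m := by
    field_simp at e3
    nlinarith [e3]
  -- from e5: l2 * s = σ q
  have h5 : l2 * s = σ * q := by
    field_simp at e5
    nlinarith [e5]
  -- s = 2 h1m / q
  have hsq : s * q = 2 * h1m := by
    have h8 : σ * (s * q) = σ * (2 * h1m) := by linear_combination h3 - s * h5
    exact mul_left_cancel₀ hσ' h8
  have hkey : Real.sqrt (2 * σ / φ) * q = 2 := by
    rw [hqdef, ← Real.sqrt_mul (by positivity)]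
    rw [show 2 * σ / φ * (2 * φ / σ) = 4 by field_simp; ring]
    rw [show (4:ℝ) = 2 ^ 2 by norm_num, Real.sqrt_sq (by norm_num)]
  have hsval : s = Real.sqrt (2 * σ / φ) * h1m := by
    have hq' : q ≠ 0 := ne_of_gt hqpos
    apply mul_right_cancel₀ hq'
    linear_combination hsq - h1m * hkey
  have hl2 : l2 = φ / h1m := by
    have h10 : l2 * (s * q) = σ * (2 * φ / σ) := by rw [← hq2]; linear_combination q * h5
    rw [hsq] at h10
    have h9 : l2 * (2 * h1m) = 2 * φ := by rw [h10]; field_simp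
    field_simp
    linarith
  exact ⟨rfl, hl2, hsval⟩
end

section
/- For all $\sigma > 0$ and $\overline{h} > \sigma + 1$, the inequality $-\sigma + \sqrt{\sigma^2\overline{h}^2 + \sigma(\overline{h}-1)^2} > (\overline{h}-1)(\sqrt{\sigma+1}-1)$ holds. -/
theorem twoside_ordering_ineq (σ hb : ℝ) (hσ : σ > 0) (hhb : hb > σ + 1) :
    -σ + Real.sqrt (σ ^ 2 * hb ^ 2 + σ * (hb - 1) ^ 2)
      > (hb - 1) * (Real.sqrt (σ + 1) - 1) := by
  set s := Real.sqrt (σ + 1) with hs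
  have hs0 : 0 ≤ s := Real.sqrt_nonneg _
  have hs2 : s ^ 2 = σ + 1 := Real.sq_sqrt (by linarith)
  have hs1 : 1 < s := by nlinarith
  have hx : 0 ≤ (hb - 1) * (s - 1) + σ := by nlinarith
  have hkey : (hb - 1) * (s - 1) + σ < Real.sqrt (σ ^ 2 * hb ^ 2 + σ * (hb - 1) ^ 2) := by
    refine (Real.lt_sqrt hx).mpr ?_
    nlinarith [sq_nonneg (hb - 1 - σ), sq_nonneg (s - 1), mul_pos hσ (sub_pos.mpr hhb)]
  linarith
end

section
/- Let $\sigma > 0$, $\phi > 0$, $h^m > 0$, $h_1^m > 0$, and set $\overline{h} = h^m/h_1^m$, $\lambda_1 = \phi/h^m$, $\lambda_2 = \phi/h_1^m$, $C_2 = \frac{-2\sigma + \sqrt{4\sigma^2 + 4\sigma(\overline{h}-1)^2}}{(\overline{h}-1)^2}h^m$ (for $\overline{h}\neq 1$), and $C_3 = \frac{C_2(\lambda_2-\lambda_1)}{\sqrt{2\sigma\phi}}$. Then $C_3 + 2\sqrt{\phi} > 0$. -/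
set_option maxHeartbeats 1000000


theorem twoside_s1_gt_s (σ φ hm h1m : ℝ)
    (hσ : σ > 0) (hφ : φ > 0) (hhm : hm > 0) (hh1m : h1m > 0)
    (hb l1 l2 C2 C3 : ℝ)
    (hhb : hb = hm / h1m) (hne : hb ≠ 1)
    (hl1 : l1 = φ / hm) (hl2 : l2 = φ / h1m)
    (hC2 : C2 = (-(2 * σ) + Real.sqrt (4 * σ ^ 2 + 4 * σ * (hb - 1) ^ 2)) / (hb - 1) ^ 2 * hm)
    (hC3 : C3 = C2 * (l2 - l1) / Real.sqrt (2 * σ * φ)) :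
    C3 + 2 * Real.sqrt φ > 0 := by
  have hd : hb - 1 ≠ 0 := sub_ne_zero.mpr hne
  have hd' : hm - h1m ≠ 0 := by
    intro h
    apply hd
    rw [hhb]
    field_simp
    linarith
  obtain ⟨d, hdd⟩ : ∃ d, d = hb - 1 := ⟨_, rfl⟩
  have hdne : d ≠ 0 := hdd ▸ hd
  have hd2 : 0 < d ^ 2 := by positivity
  obtain ⟨a, hadef⟩ : ∃ a, a = Real.sqrt (4 * σ ^ 2 + 4 * σ * d ^ 2) := ⟨_, rfl⟩
  have ha2 : a ^ 2 = 4 * σ ^ 2 + 4 * σ * d ^ 2 := by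
    rw [hadef]; exact Real.sq_sqrt (by positivity)
  have ha : 2 * σ < a := by
    rw [hadef, show (2*σ) = Real.sqrt ((2*σ)^2) by rw [Real.sqrt_sq (by positivity)]]
    apply Real.sqrt_lt_sqrt (by positivity)
    nlinarith
  obtain ⟨p, hpdef⟩ : ∃ p, p = Real.sqrt φ := ⟨_, rfl⟩
  have hp : 0 < p := hpdef ▸ Real.sqrt_pos.mpr hφ
  have hp2 : p ^ 2 = φ := by rw [hpdef]; exact Real.sq_sqrt hφ.le
  obtain ⟨s, hsdef⟩ : ∃ s, s = Real.sqrt (2 * σ * φ) := ⟨_, rfl⟩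
  have hs : 0 < s := hsdef ▸ Real.sqrt_pos.mpr (by positivity)
  have hs2 : s ^ 2 = 2 * σ * φ := by rw [hsdef]; exact Real.sq_sqrt (by positivity)
  have hC3' : C3 = (a - 2 * σ) * φ / (d * s) := by
    have hd'' : hm / h1m - 1 ≠ 0 := hhb ▸ hd
    rw [hdd, hhb] at hadef
    rw [hC3, hC2, hl1, hl2, ← hsdef, hdd, hhb, ← hadef]
    field_simp
    ring
  have key : a * p < 2 * σ * p + 2 * s * |d| := by
    have habs : 0 < |d| := abs_pos.mpr hdne
    have habs2 : |d| ^ 2 = d ^ 2 := sq_abs d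
    have hR : 0 < 2 * σ * p + 2 * s * |d| := by positivity
    have hap : 0 ≤ a * p := by nlinarith
    have hsq : (a * p) ^ 2 < (2 * σ * p + 2 * s * |d|) ^ 2 := by
      have h1 : (a * p) ^ 2 = (4 * σ ^ 2 + 4 * σ * d ^ 2) * φ := by
        rw [mul_pow, ha2, hp2]
      have h2 : (2 * σ * p + 2 * s * |d|) ^ 2
          = 4 * σ ^ 2 * p ^ 2 + 8 * σ * p * s * |d| + 4 * s ^ 2 * |d| ^ 2 := by ring
      rw [h1, h2, hs2, habs2, hp2]
      have t1 : 0 < σ * φ * d ^ 2 := by positivity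
      have t2 : 0 < σ * p * s * |d| := by positivity
      nlinarith [t1, t2]
    nlinarith
  rw [hC3', ← hpdef]
  rcases lt_or_gt_of_ne hdne with hneg | hpos
  · have hds : d * s < 0 := mul_neg_of_neg_of_pos hneg hs
    have h1 : -(2 * p) < (a - 2 * σ) * φ / (d * s) := by
      rw [lt_div_iff_of_neg hds]
      have habs : |d| = -d := abs_of_neg hneg
      rw [habs] at key
      nlinarith [key, hp, hp2]
    linarith
  · have : 0 < (a - 2 * σ) * φ / (d * s) := by
      apply div_pos (by nlinarith) (by positivity)
    linarith
end

section
/- Let $\sigma > 0$, $\phi > 0$, $h^m, h_1^m > 0$, $\overline{h} = h^m/h_1^m \neq \sigma+1$, $\lambda_1 = \phi/h^m$, $\lambda_2 = \phi/h_1^m$, $C_4 = \frac{-2\sigma\overline{h} + \sqrt{4\sigma^2\overline{h}^2 + 4\sigma(\overline{h}-\sigma-1)^2}}{(\overline{h}-\sigma-1)^2}h^m$, and $C_5 = \frac{C_4(\lambda_2-(\sigma+1)\lambda_1)}{\sqrt{2\sigma(\sigma+1)\phi}}$. Then $\sqrt{2(\sigma+1)\phi} - (\sigma+1)C_5 > 0$.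 -/
theorem twoside_s3_gt_s2 (σ φ hm h1m : ℝ)
    (hσ : σ > 0) (hφ : φ > 0) (hhm : hm > 0) (hh1m : h1m > 0)
    (hb l1 l2 C4 C5 : ℝ)
    (hhb : hb = hm / h1m) (hne : hb ≠ σ + 1)
    (hl1 : l1 = φ / hm) (hl2 : l2 = φ / h1m)
    (hC4 : C4 = (-(2 * σ * hb) + Real.sqrt (4 * σ ^ 2 * hb ^ 2 + 4 * σ * (hb - σ - 1) ^ 2))
        / (hb - σ - 1) ^ 2 * hm)
    (hC5 : C5 = C4 * (l2 - (σ + 1) * l1) / Real.sqrt (2 * σ * (σ + 1) * φ)) :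
    Real.sqrt (2 * (σ + 1) * φ) - (σ + 1) * C5 > 0 := by
  have hbpos : hb > 0 := by rw [hhb]; positivity
  set d : ℝ := hb - σ - 1 with hd
  have hdne : d ≠ 0 := fun h => hne (by rw [hd] at h; linarith)
  have hd2pos : d ^ 2 > 0 := by positivity
  set R : ℝ := Real.sqrt (4 * σ ^ 2 * hb ^ 2 + 4 * σ * (hb - σ - 1) ^ 2) with hRdef
  have hRnonneg : 0 ≤ R := Real.sqrt_nonneg _
  have hRsq : R ^ 2 = 4 * σ ^ 2 * hb ^ 2 + 4 * σ * d ^ 2 := by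
    rw [hRdef, Real.sq_sqrt (by positivity)]
  have hRgt : R > 2 * σ * hb := by nlinarith [hd2pos, hRnonneg]
  have hXpos : -(2 * σ * hb) + R > 0 := by linarith
  set S : ℝ := Real.sqrt (2 * σ * (σ + 1) * φ) with hSdef
  have hSpos : S > 0 := Real.sqrt_pos.mpr (by positivity)
  have hSsq : S ^ 2 = 2 * σ * (σ + 1) * φ := Real.sq_sqrt (by positivity)
  set T : ℝ := Real.sqrt (2 * (σ + 1) * φ) with hTdef
  have hTpos : T > 0 := Real.sqrt_pos.mpr (by positivity)
  have hsσ : Real.sqrt σ > 0 := Real.sqrt_pos.mpr hσ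
  have hsσsq : (Real.sqrt σ) ^ 2 = σ := Real.sq_sqrt hσ.le
  have hTS : T * S = 2 * (σ + 1) * φ * Real.sqrt σ := by
    rw [hTdef, hSdef, ← Real.sqrt_mul (by positivity)]
    have : 2 * (σ + 1) * φ * (2 * σ * (σ + 1) * φ) = (2 * (σ + 1) * φ) ^ 2 * σ := by ring
    rw [this, Real.sqrt_mul (by positivity), Real.sqrt_sq (by positivity)]
  -- simplify l2 - (σ+1) l1
  have hl : l2 - (σ + 1) * l1 = φ * d / hm := by
    rw [hl1, hl2, hd, hhb]
    field_simp
    ring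
  have hC5' : C5 = (-(2 * σ * hb) + R) * (φ * d) / (d ^ 2 * S) := by
    rw [hC5, hC4, hl]
    field_simp
  rcases lt_or_gt_of_ne hdne with hdneg | hdpos
  · -- d < 0 : C5 < 0
    have hnum : (-(2 * σ * hb) + R) * (φ * d) < 0 := by
      apply mul_neg_of_pos_of_neg hXpos
      exact mul_neg_of_pos_of_neg hφ hdneg
    have : C5 < 0 := by
      rw [hC5']
      exact div_neg_of_neg_of_pos hnum (by positivity)
    nlinarith
  · -- d > 0 : need R < 2σhb + 2√σ d
    have hRlt : R < 2 * σ * hb + 2 * Real.sqrt σ * d := by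
      by_contra h
      push_neg at h
      have hsq := mul_self_le_mul_self (by positivity : (0:ℝ) ≤ 2 * σ * hb + 2 * Real.sqrt σ * d) h
      have hsq2 : (2 * σ * hb + 2 * Real.sqrt σ * d) ^ 2 ≤ R ^ 2 := by
        rw [pow_two, pow_two]; exact hsq
      have hexp : (2 * σ * hb + 2 * Real.sqrt σ * d) ^ 2
          = 4 * σ ^ 2 * hb ^ 2 + 8 * σ * hb * Real.sqrt σ * d + 4 * σ * d ^ 2 := by
        linear_combination 4 * d ^ 2 * hsσsq
      have hpos : 0 < σ * hb * Real.sqrt σ * d :=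
        mul_pos (mul_pos (mul_pos hσ hbpos) hsσ) hdpos
      linarith [hsq2, hexp, hRsq, hpos]
    have h1 : T * (d ^ 2 * S) = 2 * (σ + 1) * φ * Real.sqrt σ * d ^ 2 := by
      calc T * (d ^ 2 * S) = (T * S) * d ^ 2 := by ring
        _ = 2 * (σ + 1) * φ * Real.sqrt σ * d ^ 2 := by rw [hTS]
    have hC5lt : (σ + 1) * C5 < T := by
      rw [hC5']
      have hre : (σ + 1) * ((-(2 * σ * hb) + R) * (φ * d) / (d ^ 2 * S))
          = ((σ + 1) * ((-(2 * σ * hb) + R) * (φ * d))) / (d ^ 2 * S) := by ring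
      rw [hre, div_lt_iff₀ (by positivity : (0:ℝ) < d ^ 2 * S), h1]
      have hP : (0:ℝ) < ((σ + 1) * φ * d) * (2 * Real.sqrt σ * d - (-(2 * σ * hb) + R)) :=
        mul_pos (by positivity) (by linarith)
      linarith [hP]
    linarith
end

section
/- Let $\sigma > 0$, $\phi > 0$, $h_1^m > 0$, $\overline{h} > \sigma + 1$, and $\lambda_2 = \frac{h_1^m(\overline{h}-1)(\overline{h}-\sigma-1)}{L^2}\left[1+\sqrt{1+\frac{2\sigma\phi L^2\overline{h}}{(h_1^m)^2(\overline{h}-1)^2(\overline{h}-\sigma-1)^2}}\right]$ for $L > 0$. Then the condition $\frac{L\lambda_2}{\sqrt{2\sigma\phi}} \in \left(\frac{\overline{h}+\sqrt{\sigma+1}}{\sqrt{\sigma+1}+1}, \frac{\overline{h}}{\sqrt{\sigma+1}}\right)$ is equivalent to $L \in \frac{\sqrt{2}h_1^m}{\sqrt{\sigma\phi}}\left(\sqrt{\sigma+1}(\overline{h}-1),\, (\sqrt{\sigma+1}+1)(\overline{h}+\sqrt{\sigma+1})\right)$. -/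
/-!
With `A = h₁ᵐ (h̄ - 1) (h̄ - σ - 1)`, the quadratic satisfied by `λ₂` says that
`t = L λ₂ / √(2σφ)` solves `t - h̄ / t = √2 A / (√(σφ) L)`. Since `t ↦ t - h̄ / t` is strictly
increasing on `(0, ∞)`, the condition on `t` is equivalent to `√2 A / (√(σφ) L)` lying between the
values of this map at the two endpoints, namely `(h̄ - 1)(h̄ - σ - 1) / ((√(σ+1) + 1)(h̄ + √(σ+1)))`
and `(h̄ - σ - 1) / √(σ+1)`; inverting in `L` gives the stated interval.
-/

open Set

lemma strictMonoOn_sub_div_self {d : ℝ} (hd : 0 ≤ d) :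
    StrictMonoOn (fun t : ℝ => t - d / t) (Ioi 0) := by
  intro x hx y _ hxy
  have : d / y ≤ d / x := div_le_div_of_nonneg_left hd hx hxy.le
  simp only
  linarith

lemma mem_Ioo_iff_sub_div_self_mem_Ioo {d a b t : ℝ} (hd : 0 ≤ d)
    (ha : 0 < a) (hb : 0 < b) (ht : 0 < t) :
    t ∈ Ioo a b ↔ t - d / t ∈ Ioo (a - d / a) (b - d / b) := by
  have hf := strictMonoOn_sub_div_self hd
  simp only [mem_Ioo, hf.lt_iff_lt (mem_Ioi.2 ha) (mem_Ioi.2 ht),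
    hf.lt_iff_lt (mem_Ioi.2 ht) (mem_Ioi.2 hb)]

lemma div_mem_Ioo_iff {k x p q : ℝ} (hx : 0 < x) (hp : 0 < p) (hq : 0 < q) :
    k / x ∈ Ioo p q ↔ x ∈ Ioo (k / q) (k / p) := by
  rw [mem_Ioo, mem_Ioo, lt_div_comm₀ hp hx, div_lt_comm₀ hx hq, and_comm]

lemma mul_sq_eq_of_eq_div_mul_one_add_sqrt {a B C l : ℝ} (ha : a ≠ 0) (hB : B ≠ 0)
    (hdisc : 0 ≤ 1 + a * C / B ^ 2) (hl : l = B / a * (1 + Real.sqrt (1 + a * C / B ^ 2))) :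
    a * l ^ 2 = 2 * B * l + C := by
  set E := Real.sqrt (1 + a * C / B ^ 2)
  have hE : B ^ 2 * E ^ 2 = B ^ 2 + a * C := by
    rw [Real.sq_sqrt hdisc]
    field_simp
  subst hl
  field_simp
  linear_combination hE

lemma sub_div_self_of_mul_sq_eq {A κ d L l : ℝ} (hκ : 0 < κ) (hL : 0 < L) (hl : 0 < l)
    (hroot : L ^ 2 * l ^ 2 = 2 * A * l + 2 * κ * d) :
    L * l / Real.sqrt (2 * κ) - d / (L * l / Real.sqrt (2 * κ)) =
      Real.sqrt 2 * A / Real.sqrt κ / L := by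
  have h2 : Real.sqrt 2 ^ 2 = 2 := Real.sq_sqrt zero_le_two
  have hk : Real.sqrt κ ^ 2 = κ := Real.sq_sqrt hκ.le
  have hk0 : 0 < Real.sqrt κ := Real.sqrt_pos.2 hκ
  rw [Real.sqrt_mul zero_le_two]
  field_simp
  rw [h2, hk]
  linear_combination hroot

theorem zigzag_length_bounds (σ φ h1m hb L l2 : ℝ)
    (hσ : σ > 0) (hφ : φ > 0) (hh1m : h1m > 0) (hhb : hb > σ + 1) (hL : L > 0)
    (hl2 : l2 = h1m * (hb - 1) * (hb - σ - 1) / L ^ 2 *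
      (1 + Real.sqrt (1 + 2 * σ * φ * L ^ 2 * hb /
        (h1m ^ 2 * (hb - 1) ^ 2 * (hb - σ - 1) ^ 2)))) :
    (L * l2 / Real.sqrt (2 * σ * φ) ∈
        Set.Ioo ((hb + Real.sqrt (σ + 1)) / (Real.sqrt (σ + 1) + 1))
          (hb / Real.sqrt (σ + 1))) ↔
      L ∈ Set.Ioo
        (Real.sqrt 2 * h1m / Real.sqrt (σ * φ) * (Real.sqrt (σ + 1) * (hb - 1)))
        (Real.sqrt 2 * h1m / Real.sqrt (σ * φ) *
          ((Real.sqrt (σ + 1) + 1) * (hb + Real.sqrt (σ + 1)))) := by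
  have hσφ : 0 < σ * φ := mul_pos hσ hφ
  have hb0 : 0 < hb := by linarith
  have hb1 : 0 < hb - 1 := by linarith
  have hbσ : 0 < hb - σ - 1 := by linarith
  have hs0 : 0 < Real.sqrt (σ + 1) := Real.sqrt_pos.2 (by linarith)
  have hs : Real.sqrt (σ + 1) ^ 2 = σ + 1 := Real.sq_sqrt (by linarith)
  set s := Real.sqrt (σ + 1)
  set A := h1m * (hb - 1) * (hb - σ - 1) with hA_def
  have hA : 0 < A := mul_pos (mul_pos hh1m hb1) hbσ
  have hl2pos : 0 < l2 := by
    rw [hl2]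
    exact mul_pos (div_pos hA (pow_pos hL 2)) (by positivity)
  have hroot : L ^ 2 * l2 ^ 2 = 2 * A * l2 + 2 * (σ * φ) * hb :=
    mul_sq_eq_of_eq_div_mul_one_add_sqrt (by positivity) hA.ne' (by positivity)
      (by rw [hl2, hA_def]; ring_nf)
  have hlow : (hb + s) / (s + 1) - hb / ((hb + s) / (s + 1)) =
      (hb - 1) * (hb - σ - 1) / ((s + 1) * (hb + s)) := by
    field_simp
    linear_combination (1 - hb) * hs
  have hup : hb / s - hb / (hb / s) = (hb - σ - 1) / s := by
    field_simp
    linear_combination -hs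
  rw [show 2 * σ * φ = 2 * (σ * φ) by ring,
    mem_Ioo_iff_sub_div_self_mem_Ioo hb0.le (by positivity) (by positivity) (by positivity),
    sub_div_self_of_mul_sq_eq hσφ hL hl2pos hroot, hlow, hup,
    div_mem_Ioo_iff hL (by positivity) (by positivity)]
  convert Iff.rfl using 3
  all_goals
    rw [hA_def]
    field_simp
end
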